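/- Let Λ > 0, M ≥ 1, and let γ : ℝ → ℝ be twice continuously differentiable with |γ'(s)| ≤ Λ and |γ''(s)| ≤ Λ for all s ∈ ℝ. For θ ∈ ℝ let R(θ) be the rotation about the x₃-axis by angle θ, and for x ∈ ℝ³ let W(x) be the 3×3 matrix equal to the identity except that its (2,3) entry is w(x) = γ'(x₃)(cos(γ(x₃)) x₁ + sin(γ(x₃)) x₂). For ε > 0 and k ∈ ℤ³ set x_k^ε = R(γ(ε k₃)) (ε k) ∈ ℝ³. Then there exists a constant C, depending only on Λ and M, such that for every ε ∈ (0, 1] and all κ, ξ ∈ ℤ³ with ε|κ| ≤ M and ε|ξ| ≤ M, the second and third components of the vector R(γ(ε κ₃))⁻¹ (x_{κ+ξ}^ε − x_κ^ε) − ε W(x_κ^ε) ξ have absolute value at most C ε² |ξ|². -/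

import Mathlib

open Set

/-- Euclidean norm on `ℝ³` (realized as `Fin 3 → ℝ`). -/
noncomputable def enorm3 (x : Fin 3 → ℝ) : ℝ := Real.sqrt (∑ i, x i ^ 2)

/-- Coordinatewise cast of an integer vector to a real vector. -/
def intCast3 (k : Fin 3 → ℤ) : Fin 3 → ℝ := fun i => (k i : ℝ)

/-- Rotation about the `x₃`-axis by angle `θ`. -/
noncomputable def rotZ (θ : ℝ) : Matrix (Fin 3) (Fin 3) ℝ :=
  !![Real.cos θ, -Real.sin θ, 0; Real.sin θ, Real.cos θ, 0; 0, 0, 1]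

/-- The shear function `w(x) = γ'(x₃)(cos(γ(x₃)) x₁ + sin(γ(x₃)) x₂)`. -/
noncomputable def wFun (γ : ℝ → ℝ) (x : Fin 3 → ℝ) : ℝ :=
  deriv γ (x 2) * (Real.cos (γ (x 2)) * x 0 + Real.sin (γ (x 2)) * x 1)

/-- The matrix `W(x)`: the identity except that its `(2,3)` entry equals `w(x)`. -/
noncomputable def Wmat (γ : ℝ → ℝ) (x : Fin 3 → ℝ) : Matrix (Fin 3) (Fin 3) ℝ :=
  !![1, 0, 0; 0, 1, wFun γ x; 0, 0, 1]

/-- The cell centre `x_k^ε = R(γ(ε k₃)) (ε k)` of the non-periodic plywood-like structure. -/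
noncomputable def xk (γ : ℝ → ℝ) (ε : ℝ) (k : Fin 3 → ℤ) : Fin 3 → ℝ :=
  (rotZ (γ (ε * (k 2 : ℝ)))).mulVec (ε • intCast3 k)

open Real Matrix

/-! Since `R(α)⁻¹ R(β) = R(β - α)`, the defect equals `R(δ) ε(κ + ξ) - εκ - εWξ` with
`δ = γ(ε(κ₃ + ξ₃)) - γ(εκ₃)`. Its third component vanishes, and as `w(x_κ) = ε γ'(εκ₃) κ₁`
its second one is `ε sin δ (κ₁ + ξ₁) + ε (cos δ - 1)(κ₂ + ξ₂) - ε² γ'(εκ₃) κ₁ ξ₃`.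
The mean value theorem gives `|δ| ≤ Λε|ξ|` and `δ = εξ₃ γ'(εκ₃) + O(Λε²|ξ|²)`, so the last term,
which is not small on its own, cancels against the linear part of `ε sin δ κ₁` up to
`ε² γ'(εκ₃) ξ₁ ξ₃`. What remains is `O(ε²|ξ|²)` by `|sin δ - δ|, |cos δ - 1| ≤ δ²` and
`ε|κᵢ + ξᵢ| ≤ 2M`. -/

lemma abs_sub_le_of_abs_deriv_le {f : ℝ → ℝ} {L : ℝ} (hf : Differentiable ℝ f)
    (h : ∀ s, |deriv f s| ≤ L) (a b : ℝ) : |f b - f a| ≤ L * |b - a| := by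
  simpa only [Real.norm_eq_abs] using convex_univ.norm_image_sub_le_of_norm_deriv_le
    (fun x _ => hf x) (fun x _ => h x) (mem_univ a) (mem_univ b)

lemma abs_sub_sub_mul_deriv_le {f : ℝ → ℝ} {L : ℝ} (hf : Differentiable ℝ f)
    (hf' : Differentiable ℝ (deriv f)) (h : ∀ s, |deriv (deriv f) s| ≤ L) (a b : ℝ) :
    |f b - f a - (b - a) * deriv f a| ≤ L * (b - a) ^ 2 := by
  have hderiv (x : ℝ) :
      HasDerivAt (fun t => f t - t * deriv f a) (deriv f x - deriv f a) x :=
    (hf x).hasDerivAt.sub (hasDerivAt_mul_const (deriv f a))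
  have hbound (x : ℝ) (hx : x ∈ uIcc a b) : ‖deriv f x - deriv f a‖ ≤ L * |b - a| :=
    (abs_sub_le_of_abs_deriv_le hf' h a x).trans
      (mul_le_mul_of_nonneg_left (abs_sub_left_of_mem_uIcc hx) ((abs_nonneg _).trans (h a)))
  calc |f b - f a - (b - a) * deriv f a| = ‖f b - b * deriv f a - (f a - a * deriv f a)‖ := by
        rw [Real.norm_eq_abs]; ring_nf
    _ ≤ L * |b - a| * ‖b - a‖ := (convex_uIcc a b).norm_image_sub_le_of_norm_hasDerivWithin_le
        (fun x _ => (hderiv x).hasDerivWithinAt) hbound left_mem_uIcc right_mem_uIcc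
    _ = L * (b - a) ^ 2 := by rw [Real.norm_eq_abs, mul_assoc, ← sq, sq_abs]

lemma abs_sin_sub_self_le_sq (x : ℝ) : |sin x - x| ≤ x ^ 2 := by
  have h := abs_sub_sub_mul_deriv_le differentiable_sin (by simp [differentiable_cos])
    (fun s => by simpa using abs_sin_le_one s) 0 x
  simpa using h

lemma abs_cos_sub_one_le_sq (x : ℝ) : |cos x - 1| ≤ x ^ 2 := by
  rw [abs_le]
  constructor <;> nlinarith [one_sub_sq_div_two_le_cos (x := x), cos_le_one x, sq_nonneg x]

lemma rotZ_mulVec (θ : ℝ) (x : Fin 3 → ℝ) :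
    rotZ θ *ᵥ x = ![cos θ * x 0 - sin θ * x 1, sin θ * x 0 + cos θ * x 1, x 2] := by
  ext i
  fin_cases i <;> simp [rotZ, Matrix.mulVec, dotProduct, Fin.sum_univ_three]
  ring

lemma Wmat_mulVec (γ : ℝ → ℝ) (x y : Fin 3 → ℝ) :
    Wmat γ x *ᵥ y = ![y 0, y 1 + wFun γ x * y 2, y 2] := by
  ext i
  fin_cases i <;> simp [Wmat, Matrix.mulVec, dotProduct, Fin.sum_univ_three]

lemma rotZ_mul_rotZ (α β : ℝ) : rotZ α * rotZ β = rotZ (α + β) := by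
  ext i j
  fin_cases i <;> fin_cases j <;>
    simp [rotZ, Matrix.mul_apply, Fin.sum_univ_three, cos_add, sin_add] <;> ring

lemma rotZ_zero : rotZ 0 = 1 := by
  ext i j
  fin_cases i <;> fin_cases j <;> simp [rotZ]

lemma rotZ_inv (θ : ℝ) : (rotZ θ)⁻¹ = rotZ (-θ) :=
  Matrix.inv_eq_right_inv (by rw [rotZ_mul_rotZ, add_neg_cancel, rotZ_zero])

lemma wFun_xk (γ : ℝ → ℝ) (ε : ℝ) (κ : Fin 3 → ℤ) :
    wFun γ (xk γ ε κ) = ε * deriv γ (ε * κ 2) * κ 0 := by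
  simp [wFun, xk, rotZ_mulVec, intCast3]
  linear_combination (ε * deriv γ (ε * κ 2) * κ 0) * sin_sq_add_cos_sq (γ (ε * κ 2))

noncomputable def latticeDefect (γ : ℝ → ℝ) (ε : ℝ) (κ ξ : Fin 3 → ℤ) : Fin 3 → ℝ :=
  (rotZ (γ (ε * (κ 2 : ℝ))))⁻¹ *ᵥ (xk γ ε (κ + ξ) - xk γ ε κ) -
    ε • Wmat γ (xk γ ε κ) *ᵥ intCast3 ξ

lemma rotZ_inv_mulVec_xk_sub_xk (γ : ℝ → ℝ) (ε : ℝ) (κ ξ : Fin 3 → ℤ) :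
    (rotZ (γ (ε * κ 2)))⁻¹ *ᵥ (xk γ ε (κ + ξ) - xk γ ε κ) =
      rotZ (γ (ε * (κ 2 + ξ 2)) - γ (ε * κ 2)) *ᵥ (ε • intCast3 (κ + ξ)) - ε • intCast3 κ := by
  simp only [xk, mulVec_sub, mulVec_mulVec, rotZ_inv, rotZ_mul_rotZ, Pi.add_apply, Int.cast_add]
  rw [neg_add_cancel, rotZ_zero, one_mulVec, neg_add_eq_sub]

lemma latticeDefect_apply_one (γ : ℝ → ℝ) (ε : ℝ) (κ ξ : Fin 3 → ℤ) :
    latticeDefect γ ε κ ξ 1 =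
      ε * sin (γ (ε * (κ 2 + ξ 2)) - γ (ε * κ 2)) * (κ 0 + ξ 0) +
        ε * (cos (γ (ε * (κ 2 + ξ 2)) - γ (ε * κ 2)) - 1) * (κ 1 + ξ 1) -
        ε ^ 2 * deriv γ (ε * κ 2) * κ 0 * ξ 2 := by
  simp [latticeDefect, rotZ_inv_mulVec_xk_sub_xk, rotZ_mulVec, Wmat_mulVec, wFun_xk, intCast3,
    vecHead, vecTail]
  ring

lemma latticeDefect_apply_two (γ : ℝ → ℝ) (ε : ℝ) (κ ξ : Fin 3 → ℤ) :
    latticeDefect γ ε κ ξ 2 = 0 := by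
  simp [latticeDefect, rotZ_inv_mulVec_xk_sub_xk, rotZ_mulVec, Wmat_mulVec, intCast3, vecHead,
    vecTail]
  ring

lemma enorm3_nonneg (x : Fin 3 → ℝ) : 0 ≤ enorm3 x := sqrt_nonneg _

lemma abs_le_enorm3 (x : Fin 3 → ℝ) (i : Fin 3) : |x i| ≤ enorm3 x := by
  rw [enorm3, ← sqrt_sq_eq_abs]
  exact sqrt_le_sqrt (Finset.single_le_sum (fun j _ => sq_nonneg (x j)) (Finset.mem_univ i))

lemma abs_mul_add_le_of_mul_enorm3_le {ε M : ℝ} {κ ξ : Fin 3 → ℤ} (hε : 0 ≤ ε)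
    (hκ : ε * enorm3 (intCast3 κ) ≤ M) (hξ : ε * enorm3 (intCast3 ξ) ≤ M) (i : Fin 3) :
    |ε * (κ i + ξ i)| ≤ 2 * M := by
  have hκi : ε * |(κ i : ℝ)| ≤ M :=
    (mul_le_mul_of_nonneg_left (abs_le_enorm3 (intCast3 κ) i) hε).trans hκ
  have hξi : ε * |(ξ i : ℝ)| ≤ M :=
    (mul_le_mul_of_nonneg_left (abs_le_enorm3 (intCast3 ξ) i) hε).trans hξ
  calc |ε * (κ i + ξ i)| ≤ ε * |(κ i : ℝ)| + ε * |(ξ i : ℝ)| := by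
        rw [abs_mul, abs_of_nonneg hε, ← mul_add]; gcongr; exact abs_add_le _ _
    _ ≤ 2 * M := by linarith

lemma abs_latticeDefect_one_le {γ : ℝ → ℝ} {Λ M ε : ℝ} {κ ξ : Fin 3 → ℤ} (hγ : ContDiff ℝ 2 γ)
    (hγ' : ∀ s, |deriv γ s| ≤ Λ) (hγ'' : ∀ s, |deriv (deriv γ) s| ≤ Λ) (hε : 0 < ε)
    (hκ : ε * enorm3 (intCast3 κ) ≤ M) (hξ : ε * enorm3 (intCast3 ξ) ≤ M) :
    |latticeDefect γ ε κ ξ 1| ≤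
      (4 * M * Λ ^ 2 + 2 * M * Λ + Λ) * ε ^ 2 * enorm3 (intCast3 ξ) ^ 2 := by
  have hγd : Differentiable ℝ γ := hγ.differentiable (by norm_num)
  have hγ'd : Differentiable ℝ (deriv γ) := hγ.differentiable_deriv_two
  have hΛ : 0 ≤ Λ := (abs_nonneg _).trans (hγ' 0)
  have hM : 0 ≤ M := (mul_nonneg hε.le (enorm3_nonneg _)).trans hξ
  rw [latticeDefect_apply_one]
  set N := enorm3 (intCast3 ξ)
  have hξN (i : Fin 3) : |(ξ i : ℝ)| ≤ N := abs_le_enorm3 (intCast3 ξ) i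
  set a := ε * (κ 2 : ℝ)
  set g := deriv γ a
  set δ := γ (ε * (κ 2 + ξ 2)) - γ a
  have hstep : ε * (κ 2 + ξ 2) - a = ε * ξ 2 := by ring
  have hstepN : |ε * ξ 2| ≤ ε * N := by rw [abs_mul, abs_of_pos hε]; gcongr; exact hξN 2
  have hδ : |δ| ≤ Λ * (ε * N) := by
    have h := abs_sub_le_of_abs_deriv_le hγd hγ' a (ε * (κ 2 + ξ 2))
    rw [hstep] at h
    exact h.trans (by gcongr)
  have hδsq : δ ^ 2 ≤ (Λ * (ε * N)) ^ 2 := sq_le_sq.mpr (hδ.trans (le_abs_self _))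
  have htaylor : |δ - ε * ξ 2 * g| ≤ Λ * (ε * N) ^ 2 := by
    have h := abs_sub_sub_mul_deriv_le hγd hγ'd hγ'' a (ε * (κ 2 + ξ 2))
    rw [hstep] at h
    exact h.trans (mul_le_mul_of_nonneg_left (sq_le_sq.mpr (hstepN.trans (le_abs_self _))) hΛ)
  have hP := abs_mul_add_le_of_mul_enorm3_le hε.le hκ hξ 0
  have hQ := abs_mul_add_le_of_mul_enorm3_le hε.le hκ hξ 1
  have hsin : |sin δ - δ| ≤ (Λ * (ε * N)) ^ 2 := (abs_sin_sub_self_le_sq δ).trans hδsq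
  have hcos : |cos δ - 1| ≤ (Λ * (ε * N)) ^ 2 := (abs_cos_sub_one_le_sq δ).trans hδsq
  have hg : |g| ≤ Λ := hγ' a
  calc _
      = |ε * (κ 0 + ξ 0) * (sin δ - δ) + ε * (κ 0 + ξ 0) * (δ - ε * ξ 2 * g) +
          ε ^ 2 * (g * ξ 2 * ξ 0) + ε * (κ 1 + ξ 1) * (cos δ - 1)| := by
        congr 1; ring
    _ ≤ |ε * (κ 0 + ξ 0)| * |sin δ - δ| + |ε * (κ 0 + ξ 0)| * |δ - ε * ξ 2 * g| +
          ε ^ 2 * (|g| * |(ξ 2 : ℝ)| * |(ξ 0 : ℝ)|) + |ε * (κ 1 + ξ 1)| * |cos δ - 1| := by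
        refine (norm_add₄_le (E := ℝ)).trans_eq ?_
        simp only [Real.norm_eq_abs, abs_mul, abs_pow, sq_abs]
    _ ≤ 2 * M * (Λ * (ε * N)) ^ 2 + 2 * M * (Λ * (ε * N) ^ 2) + ε ^ 2 * (Λ * N * N) +
          2 * M * (Λ * (ε * N)) ^ 2 := by
        gcongr
        exacts [mul_nonneg hΛ (enorm3_nonneg _), hξN 2, hξN 0]
    _ = (4 * M * Λ ^ 2 + 2 * M * Λ + Λ) * ε ^ 2 * N ^ 2 := by ring

theorem stmt_11_general (Λ M : ℝ) :
    ∃ C : ℝ, ∀ γ : ℝ → ℝ, ContDiff ℝ 2 γ →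
      (∀ s : ℝ, |deriv γ s| ≤ Λ) → (∀ s : ℝ, |deriv (deriv γ) s| ≤ Λ) →
      ∀ ε : ℝ, 0 < ε → ε ≤ 1 →
        ∀ κ ξ : Fin 3 → ℤ,
          ε * enorm3 (intCast3 κ) ≤ M → ε * enorm3 (intCast3 ξ) ≤ M →
          ∀ v : Fin 3 → ℝ,
            v = (rotZ (γ (ε * (κ 2 : ℝ))))⁻¹.mulVec (xk γ ε (κ + ξ) - xk γ ε κ) -
                  ε • (Wmat γ (xk γ ε κ)).mulVec (intCast3 ξ) →
            |v 1| ≤ C * ε ^ 2 * enorm3 (intCast3 ξ) ^ 2 ∧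
            |v 2| ≤ C * ε ^ 2 * enorm3 (intCast3 ξ) ^ 2 := by
  refine ⟨4 * M * Λ ^ 2 + 2 * M * Λ + Λ, fun γ hγ hγ' hγ'' ε hε _ κ ξ hκ hξ v hv => ?_⟩
  subst hv
  have h1 := abs_latticeDefect_one_le hγ hγ' hγ'' hε hκ hξ
  refine ⟨h1, ?_⟩
  change |latticeDefect γ ε κ ξ 2| ≤ _
  rw [latticeDefect_apply_two, abs_zero]
  exact (abs_nonneg _).trans h1

/-- Taylor-expansion estimate: the second and third components of
`R(γ(ε κ₃))⁻¹ (x_{κ+ξ}^ε − x_κ^ε) − ε W(x_κ^ε) ξ` are of order `ε² |ξ|²`, with a constant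
depending only on `Λ` and `M`. -/
theorem stmt_11 (Λ M : ℝ) (hΛ : 0 < Λ) (hM : 1 ≤ M) :
    ∃ C : ℝ, ∀ γ : ℝ → ℝ, ContDiff ℝ 2 γ →
      (∀ s : ℝ, |deriv γ s| ≤ Λ) → (∀ s : ℝ, |deriv (deriv γ) s| ≤ Λ) →
      ∀ ε : ℝ, 0 < ε → ε ≤ 1 →
        ∀ κ ξ : Fin 3 → ℤ,
          ε * enorm3 (intCast3 κ) ≤ M → ε * enorm3 (intCast3 ξ) ≤ M →
          ∀ v : Fin 3 → ℝ,
            v = (rotZ (γ (ε * (κ 2 : ℝ))))⁻¹.mulVec (xk γ ε (κ + ξ) - xk γ ε κ) -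
                  ε • (Wmat γ (xk γ ε κ)).mulVec (intCast3 ξ) →
            |v 1| ≤ C * ε ^ 2 * enorm3 (intCast3 ξ) ^ 2 ∧
            |v 2| ≤ C * ε ^ 2 * enorm3 (intCast3 ξ) ^ 2 :=
  stmt_11_general Λ M
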